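/- arXiv:1606.00608 — 5 statements merged into one kernel-verified Lean document; each statement's English description precedes it below -/
import Mathlib

section
/- Let λ_{a,1}, …, λ_{a,x_a} and λ_{b,1}, …, λ_{b,x_b} be nonzero complex numbers. If Σ_{k=1}^{x_a} λ_{a,k}^N = Σ_{k=1}^{x_b} λ_{b,k}^N for every integer N with 1 ≤ N ≤ max{x_a, x_b}, then x_a = x_b and the multisets {λ_{a,1}, …, λ_{a,x_a}} and {λ_{b,1}, …, λ_{b,x_b}} coincide. -/
/-!
Pad both families with zeros to the common length `m = max xa xb`; this leaves the power sums
of positive exponent unchanged. By Newton's identities the power sums `p_1, …, p_m` determine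
the elementary symmetric functions `e_1, …, e_m` in characteristic zero, hence the polynomial
`∏ (X - λ)` and with it its multiset of roots, the padded family. Since the original entries are
nonzero, the numbers of padding zeros agree, and cancelling them leaves two equal multisets.
-/

open Finset Polynomial

theorem Multiset.esymm_eq_zero_of_card_lt {R : Type*} [CommSemiring R] {s : Multiset R} {k : ℕ}
    (h : card s < k) : s.esymm k = 0 := by
  simp [esymm, powersetCard_eq_empty _ h]

section

variable {R : Type*} [CommRing R]

theorem Multiset.mul_esymm_eq_sum (s : Multiset R) (k : ℕ) :
    k * s.esymm k = (-1) ^ (k + 1) *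
      ∑ a ∈ HasAntidiagonal.antidiagonal k with a.1 < k,
        (-1) ^ a.1 * s.esymm a.1 * (s.map (· ^ a.2)).sum := by
  classical
  have hpsum (n : ℕ) : ∑ x : s, (x : R) ^ n = (s.map (· ^ n)).sum :=
    congrArg Multiset.sum (Multiset.map_univ s (· ^ n))
  have h := congrArg (MvPolynomial.aeval (R := R) fun x : s => (x : R))
    (MvPolynomial.mul_esymm_eq_sum s R k)
  simpa only [map_mul, map_pow, map_neg, map_one, map_natCast, map_sum, MvPolynomial.psum,
    MvPolynomial.aeval_X, MvPolynomial.aeval_esymm_eq_multiset_esymm, Multiset.map_univ_coe,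
    hpsum] using h

theorem Multiset.esymm_eq_of_sum_map_pow_eq [IsDomain R] [CharZero R] {s t : Multiset R}
    (hcard : card s = card t)
    (h : ∀ N, 1 ≤ N → N ≤ card s → (s.map (· ^ N)).sum = (t.map (· ^ N)).sum) (k : ℕ) :
    s.esymm k = t.esymm k := by
  induction k using Nat.strong_induction_on with
  | _ k ih =>
    rcases Nat.eq_zero_or_pos k with rfl | hk
    · simp [esymm]
    rcases le_or_gt k (card s) with hks | hks
    · refine mul_left_cancel₀ (Nat.cast_ne_zero.mpr hk.ne' : (k : R) ≠ 0) ?_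
      rw [mul_esymm_eq_sum, mul_esymm_eq_sum]
      congr 1
      refine Finset.sum_congr rfl fun p hp => ?_
      rw [Finset.mem_filter, HasAntidiagonal.mem_antidiagonal] at hp
      rw [ih p.1 hp.2, h p.2 (by omega) (by omega)]
    · rw [esymm_eq_zero_of_card_lt hks, esymm_eq_zero_of_card_lt (hcard ▸ hks)]

theorem Multiset.eq_of_esymm_eq [IsDomain R] {s t : Multiset R} (hcard : card s = card t)
    (h : ∀ k, s.esymm k = t.esymm k) : s = t := by
  rw [← roots_multiset_prod_X_sub_C s, ← roots_multiset_prod_X_sub_C t,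
    prod_X_sub_X_eq_sum_esymm, prod_X_sub_X_eq_sum_esymm, hcard]
  simp only [h]

theorem Multiset.eq_of_sum_map_pow_eq [IsDomain R] [CharZero R] {s t : Multiset R}
    (hcard : card s = card t)
    (h : ∀ N, 1 ≤ N → N ≤ card s → (s.map (· ^ N)).sum = (t.map (· ^ N)).sum) : s = t :=
  eq_of_esymm_eq hcard (esymm_eq_of_sum_map_pow_eq hcard h)

end

theorem Multiset.sum_map_pow_add_replicate_zero {R : Type*} [Semiring R] (s : Multiset R)
    (m : ℕ) {N : ℕ} (hN : N ≠ 0) :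
    ((s + replicate m 0).map (· ^ N)).sum = (s.map (· ^ N)).sum := by
  simp [zero_pow hN]

theorem Multiset.eq_of_add_replicate_eq_add_replicate {α : Type*} {s t : Multiset α} {a : α}
    {m n : ℕ} (hs : a ∉ s) (ht : a ∉ t) (h : s + replicate m a = t + replicate n a) : s = t := by
  classical
  have hmn : m = n := by
    simpa [count_eq_zero_of_notMem hs, count_eq_zero_of_notMem ht] using congrArg (count a) h
  exact add_right_cancel (hmn ▸ h)

theorem Fintype.exists_equiv_of_map_univ_eq {α β γ : Type*} [Fintype α] [Fintype β]
    {f : α → γ} {g : β → γ} (h : univ.val.map f = univ.val.map g) :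
    ∃ e : α ≃ β, ∀ x, f x = g (e x) := by
  classical
  refine ⟨Equiv.ofPreimageEquiv fun c => Fintype.equivOfCardEq ?_,
    fun x => (Equiv.ofPreimageEquiv_map _ x).symm⟩
  simpa [Fintype.card_subtype, Finset.card_def, Finset.filter_val, Multiset.count_map, eq_comm]
    using congrArg (Multiset.count c) h

/-- Two finite families of nonzero complex numbers whose power sums agree for all
exponents `1 ≤ N ≤ max{x_a, x_b}` have the same size and coincide as multisets. -/
theorem power_sums_determine_multiset
    {xa xb : ℕ} (a : Fin xa → ℂ) (b : Fin xb → ℂ)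
    (ha : ∀ k, a k ≠ 0) (hb : ∀ k, b k ≠ 0)
    (h : ∀ N : ℕ, 1 ≤ N → N ≤ max xa xb →
      ∑ k, a k ^ N = ∑ k, b k ^ N) :
    xa = xb ∧ ∃ σ : Fin xa ≃ Fin xb, ∀ k, a k = b (σ k) := by
  have hpad : univ.val.map a + Multiset.replicate (max xa xb - xa) 0 =
      univ.val.map b + Multiset.replicate (max xa xb - xb) 0 := by
    refine Multiset.eq_of_sum_map_pow_eq (by simp) fun N hN hNm => ?_
    simp only [Multiset.sum_map_pow_add_replicate_zero _ _ (by omega : N ≠ 0), Multiset.map_map]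
    exact h N hN (by simpa using hNm)
  have hab := Multiset.eq_of_add_replicate_eq_add_replicate
    (by simpa using ha) (by simpa using hb) hpad
  obtain ⟨e, he⟩ := Fintype.exists_equiv_of_map_univ_eq hab
  exact ⟨by simpa using Fintype.card_congr e, e, he⟩
end

section
/- Let M be a mixed-state tensor with physical dimension d and bond dimension D that generates MPDO and is a renormalization fixed point. Then M has zero correlation length: the D×D matrix T = Σ_{i=1}^d M^{(i,i)} satisfies T² = T. -/
open scoped Matrix Kronecker ComplexOrder
open Filter

noncomputable section

/-- The coefficients of the matrix product vector (MPV) generated by the tensor `A`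
on a ring of `N` sites: `⟨i₁,…,i_N | V^(N)(A)⟩ = tr (A^{i₁} ⋯ A^{i_N})`. -/
def mpvVec {ι : Type} {D : ℕ} (A : ι → Matrix (Fin D) (Fin D) ℂ) (N : ℕ) :
    (Fin N → ι) → ℂ :=
  fun is => Matrix.trace (List.ofFn fun n => A (is n)).prod

/-- The (mixed) transfer matrix `Σ_i A^i ⊗ conj (B^i)` of two tensors. -/
def transferMat {ι : Type} [Fintype ι] {D D' : ℕ}
    (A : ι → Matrix (Fin D) (Fin D) ℂ) (B : ι → Matrix (Fin D') (Fin D') ℂ) :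
    Matrix (Fin D × Fin D') (Fin D × Fin D') ℂ :=
  ∑ i, (A i) ⊗ₖ ((B i).map (starRingEnd ℂ))

/-- A tensor is *normal* if (i) there is no nontrivial orthogonal projector `P` with
`A^i P = P A^i P` for all `i`, and (ii) its transfer matrix has spectral radius 1,
`1` as an algebraically simple eigenvalue, and no other eigenvalue of modulus one. -/
def IsNormalTensor {ι : Type} [Fintype ι] {D : ℕ}
    (A : ι → Matrix (Fin D) (Fin D) ℂ) : Prop :=
  (∀ P : Matrix (Fin D) (Fin D) ℂ, P.IsHermitian → P * P = P →
      (∀ i, A i * P = P * (A i * P)) → P = 0 ∨ P = 1) ∧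
  (∀ μ : ℂ, (transferMat A A).charpoly.IsRoot μ →
      ‖μ‖ ≤ 1 ∧ (‖μ‖ = 1 → μ = 1)) ∧
  Polynomial.rootMultiplicity 1 (transferMat A A).charpoly = 1

/-- A tensor is in *canonical form* if it is (up to a relabeling of the bond basis)
block diagonal, `A^i = ⊕_k μ_k A_k^i`, with each `A_k` a normal tensor, `|μ_k| ≤ 1`
and at least one `μ_k` of modulus one. -/
def InCanonicalForm {ι : Type} [Fintype ι] {D : ℕ}
    (A : ι → Matrix (Fin D) (Fin D) ℂ) : Prop :=
  ∃ (r : ℕ) (Dk : Fin r → ℕ) (μ : Fin r → ℂ)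
    (Ak : (k : Fin r) → ι → Matrix (Fin (Dk k)) (Fin (Dk k)) ℂ)
    (e : Fin D ≃ ((k : Fin r) × Fin (Dk k))),
    (∀ k, IsNormalTensor (Ak k)) ∧ (∀ k, ‖μ k‖ ≤ 1) ∧
    (∃ k, ‖μ k‖ = 1) ∧
    ∀ i, A i = Matrix.reindex e.symm e.symm (Matrix.blockDiagonal' fun k => μ k • Ak k i)

/-- `B = (B_1, …, B_g)` is a *basis of normal tensors* (BNT) of `A`: each `B_j` is normal,
every `V^(N)(A)` is a linear combination of the `V^(N)(B_j)`, and for all sufficiently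
large `N` the vectors `V^(N)(B_j)` are linearly independent. -/
def IsBNTof {ι : Type} [Fintype ι] {D : ℕ} (A : ι → Matrix (Fin D) (Fin D) ℂ)
    {g : ℕ} {Dj : Fin g → ℕ}
    (B : (j : Fin g) → ι → Matrix (Fin (Dj j)) (Fin (Dj j)) ℂ) : Prop :=
  (∀ j, IsNormalTensor (B j)) ∧
  (∀ N : ℕ, mpvVec A N ∈ Submodule.span ℂ (Set.range fun j => mpvVec (B j) N)) ∧
  (∃ N₀ : ℕ, ∀ N > N₀, LinearIndependent ℂ fun j => mpvVec (B j) N)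

/-- `B` equals `A` up to a phase and a similarity (gauge) transformation:
`B^i = e^{iφ} X A^i X⁻¹` for all `i`, with `X` invertible. -/
def SimilarUpToPhase {ι : Type} {D₁ D₂ : ℕ}
    (B : ι → Matrix (Fin D₁) (Fin D₁) ℂ) (A : ι → Matrix (Fin D₂) (Fin D₂) ℂ) : Prop :=
  ∃ (φ : ℝ) (X : Matrix (Fin D₁) (Fin D₂) ℂ) (Y : Matrix (Fin D₂) (Fin D₁) ℂ),
    X * Y = 1 ∧ Y * X = 1 ∧
    ∀ i, B i = Complex.exp ((φ : ℂ) * Complex.I) • (X * A i * Y)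

/-- The matrix product density operator `ρ^(N)(M)` generated by a mixed-state tensor:
`⟨i₁,…,i_N| ρ^(N)(M) |j₁,…,j_N⟩ = tr (M^{(i₁,j₁)} ⋯ M^{(i_N,j_N)})`. -/
def mpdo {d D : ℕ} (M : Fin d → Fin d → Matrix (Fin D) (Fin D) ℂ) (N : ℕ) :
    Matrix (Fin N → Fin d) (Fin N → Fin d) ℂ :=
  fun is js => Matrix.trace (List.ofFn fun n => M (is n) (js n)).prod

/-- `M` generates MPDO: all the operators `ρ^(N)(M)` are positive semidefinite. -/
def GeneratesMPDO {d D : ℕ} (M : Fin d → Fin d → Matrix (Fin D) (Fin D) ℂ) : Prop :=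
  ∀ N : ℕ, 1 ≤ N → (mpdo M N).PosSemidef

/-- The horizontal MPV tensor associated to a mixed-state tensor: the physical index is
the pair `(i,j)`. -/
def horiz {d D : ℕ} (M : Fin d → Fin d → Matrix (Fin D) (Fin D) ℂ) :
    Fin d × Fin d → Matrix (Fin D) (Fin D) ℂ :=
  fun ij => M ij.1 ij.2

/-- The vertical matrices of a mixed-state tensor: `(N_{(α,β)})_{i,j} = (M^{(i,j)})_{α,β}`.
Viewed as a tensor with physical index `(α,β)` and bond dimension `d`, this is the
vertical direction tensor of `M`. -/
def vert {d D : ℕ} (M : Fin d → Fin d → Matrix (Fin D) (Fin D) ℂ) :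
    Fin D × Fin D → Matrix (Fin d) (Fin d) ℂ :=
  fun αβ i j => M i j αβ.1 αβ.2

/-- A trace-preserving completely positive map between matrix algebras, in Kraus form. -/
def IsTPCPM {m n : Type} [Fintype m] [Fintype n] [DecidableEq m]
    (S : Matrix m m ℂ → Matrix n n ℂ) : Prop :=
  ∃ (κ : ℕ) (B : Fin κ → Matrix n m ℂ),
    (∑ k, (B k)ᴴ * B k = 1) ∧ ∀ X, S X = ∑ k, B k * X * (B k)ᴴ

/-- The one-site map `M₁(X)_{i,j} = tr(M^{(i,j)} X)`. -/
def oneSite {d D : ℕ} (M : Fin d → Fin d → Matrix (Fin D) (Fin D) ℂ)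
    (X : Matrix (Fin D) (Fin D) ℂ) : Matrix (Fin d) (Fin d) ℂ :=
  fun i j => Matrix.trace (M i j * X)

/-- The two-site map `M₂(X)_{(i₁,i₂),(j₁,j₂)} = tr(M^{(i₁,j₁)} M^{(i₂,j₂)} X)`. -/
def twoSite {d D : ℕ} (M : Fin d → Fin d → Matrix (Fin D) (Fin D) ℂ)
    (X : Matrix (Fin D) (Fin D) ℂ) : Matrix (Fin d × Fin d) (Fin d × Fin d) ℂ :=
  fun ii jj => Matrix.trace (M ii.1 jj.1 * M ii.2 jj.2 * X)

/-- *Renormalization fixed point* for mixed-state tensors: there exist trace-preserving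
completely positive maps `S` and `T` with `S[M₂(X)] = M₁(X)` and `T[M₁(X)] = M₂(X)` for
all `X`. -/
def IsMPDORFP {d D : ℕ} (M : Fin d → Fin d → Matrix (Fin D) (Fin D) ℂ) : Prop :=
  ∃ (S : Matrix (Fin d × Fin d) (Fin d × Fin d) ℂ → Matrix (Fin d) (Fin d) ℂ)
    (T : Matrix (Fin d) (Fin d) ℂ → Matrix (Fin d × Fin d) (Fin d × Fin d) ℂ),
    IsTPCPM S ∧ IsTPCPM T ∧
    ∀ X : Matrix (Fin D) (Fin D) ℂ,
      S (twoSite M X) = oneSite M X ∧ T (oneSite M X) = twoSite M X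

/-
With `T = Σ_i M^{(i,i)}` one has `tr M₁(X) = tr (T X)` and `tr M₂(X) = tr (T² X)`. Since the
Kraus map `S` preserves traces, `S[M₂(X)] = M₁(X)` gives `tr (T² X) = tr (T X)` for every `X`,
and trace duality yields `T² = T`.
-/

theorem IsTPCPM.trace_apply {m n : Type} [Fintype m] [Fintype n] [DecidableEq m]
    {S : Matrix m m ℂ → Matrix n n ℂ} (hS : IsTPCPM S) (X : Matrix m m ℂ) :
    (S X).trace = X.trace := by
  obtain ⟨κ, B, hB, hSB⟩ := hS
  calc (S X).trace
      = (∑ k, (B k)ᴴ * B k * X).trace := by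
        simp only [hSB, Matrix.trace_sum]
        exact Fintype.sum_congr _ _ fun k => Matrix.trace_mul_cycle _ _ _
    _ = X.trace := by rw [← Finset.sum_mul, hB, Matrix.one_mul]

section TraceOfSiteMaps

variable {d D : ℕ} (M : Fin d → Fin d → Matrix (Fin D) (Fin D) ℂ) (X : Matrix (Fin D) (Fin D) ℂ)

theorem trace_oneSite : (oneSite M X).trace = ((∑ i, M i i) * X).trace :=
  calc (oneSite M X).trace = ∑ i, (M i i * X).trace := rfl
    _ = ((∑ i, M i i) * X).trace := by rw [Finset.sum_mul, Matrix.trace_sum]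

theorem trace_twoSite :
    (twoSite M X).trace = ((∑ i, M i i) * (∑ i, M i i) * X).trace :=
  calc (twoSite M X).trace = ∑ i, ∑ j, (M i i * M j j * X).trace := Fintype.sum_prod_type _
    _ = ((∑ i, M i i) * (∑ i, M i i) * X).trace := by
      simp only [Finset.sum_mul, Finset.mul_sum, Matrix.trace_sum]
      exact Finset.sum_comm

end TraceOfSiteMaps

theorem MPDO_RFP_implies_zero_correlation_length_general
    {d D : ℕ} (M : Fin d → Fin d → Matrix (Fin D) (Fin D) ℂ)
    (hRFP : IsMPDORFP M) :
    (∑ i, M i i) * (∑ i, M i i) = ∑ i, M i i := by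
  obtain ⟨S, _, hS, -, hST⟩ := hRFP
  refine Matrix.ext_iff_trace_mul_right.mpr fun X => ?_
  rw [← trace_twoSite, ← trace_oneSite, ← (hST X).1, hS.trace_apply]

/-- A mixed-state tensor generating MPDO which is a renormalization fixed point has zero
correlation length: the matrix `T = Σ_i M^{(i,i)}` is idempotent. -/
theorem MPDO_RFP_implies_zero_correlation_length
    {d D : ℕ} (M : Fin d → Fin d → Matrix (Fin D) (Fin D) ℂ)
    (hMPDO : GeneratesMPDO M)
    (hRFP : IsMPDORFP M) :
    (∑ i, M i i) * (∑ i, M i i) = ∑ i, M i i :=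
  MPDO_RFP_implies_zero_correlation_length_general M hRFP
end
end

section
/- Let H_A, H_X, H_B be finite-dimensional complex Hilbert spaces and let K be a subspace of H_A ⊗ H_X ⊗ H_B. Then K corresponds to a parent commuting Hamiltonian if and only if the regions A and B are decorrelated for K. -/
/-!
Write `P` for the projection onto `K`. If `Q_AX ⊗ 1` and `1 ⊗ Q_XB` are commuting projections,
then `P = (1 - Q_AX ⊗ 1) (1 - 1 ⊗ Q_XB)`; an observable on `A` commutes with the second factor
and one on `B` with the first, and this alone kills `P O_A (1 - P) O_B P`.

Conversely, let `V_AX ⊆ H_A ⊗ H_X` be spanned by the slices `k(·, ·, β)` of the vectors of `K`,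
and `U = V_AX ⊗ H_B`; symmetrically `W = H_A ⊗ V_XB`. Then `U` is spanned by the vectors `O_B k`
and `W` by the vectors `O_A k` with `k ∈ K`, so decorrelation makes `U ⊖ K` orthogonal to
`W ⊖ K`. Hence `P_U P_W = P = P_W P_U`, and the projections `Q_AX`, `Q_XB` onto the orthogonal
complements of `V_AX`, `V_XB` form a commuting parent Hamiltonian whose ground space is
`U ∩ W = K`.
-/

open scoped Matrix

noncomputable section

/-- The orthogonal projection onto a subspace `K` of a finite-dimensional Hilbert space,
as an endomorphism. -/
def projOnto {ι : Type} [Fintype ι]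
    (K : Submodule ℂ (EuclideanSpace ℂ ι)) :
    EuclideanSpace ℂ ι →ₗ[ℂ] EuclideanSpace ℂ ι :=
  K.subtype ∘ₗ (K.orthogonalProjection).toLinearMap

/-- `O_A ⊗ 1 ⊗ 1` acting on `H_A ⊗ H_X ⊗ H_B`, as a matrix. -/
def embA {a x b : ℕ} (O : Matrix (Fin a) (Fin a) ℂ) :
    Matrix (Fin a × Fin x × Fin b) (Fin a × Fin x × Fin b) ℂ :=
  fun u v => O u.1 v.1 * (if u.2 = v.2 then 1 else 0)

/-- `1 ⊗ 1 ⊗ O_B` acting on `H_A ⊗ H_X ⊗ H_B`, as a matrix. -/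
def embB {a x b : ℕ} (O : Matrix (Fin b) (Fin b) ℂ) :
    Matrix (Fin a × Fin x × Fin b) (Fin a × Fin x × Fin b) ℂ :=
  fun u v => (if (u.1, u.2.1) = (v.1, v.2.1) then 1 else 0) * O u.2.2 v.2.2

/-- `Q_{AX} ⊗ 1_B` acting on `H_A ⊗ H_X ⊗ H_B`, as a matrix. -/
def embAX {a x b : ℕ} (Q : Matrix (Fin a × Fin x) (Fin a × Fin x) ℂ) :
    Matrix (Fin a × Fin x × Fin b) (Fin a × Fin x × Fin b) ℂ :=
  fun u v => Q (u.1, u.2.1) (v.1, v.2.1) * (if u.2.2 = v.2.2 then 1 else 0)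

/-- `1_A ⊗ Q_{XB}` acting on `H_A ⊗ H_X ⊗ H_B`, as a matrix. -/
def embXB {a x b : ℕ} (Q : Matrix (Fin x × Fin b) (Fin x × Fin b) ℂ) :
    Matrix (Fin a × Fin x × Fin b) (Fin a × Fin x × Fin b) ℂ :=
  fun u v => (if u.1 = v.1 then 1 else 0) * Q (u.2.1, u.2.2) (v.2.1, v.2.2)

/-- The regions `A` and `B` are *decorrelated* for the subspace `K`: for all observables
`O_A` on `H_A` and `O_B` on `H_B`, `P O_A (1-P) O_B P = 0 = P O_B (1-P) O_A P`, where
`P` is the orthogonal projection onto `K`. -/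
def Decorrelated {a x b : ℕ}
    (K : Submodule ℂ (EuclideanSpace ℂ (Fin a × Fin x × Fin b))) : Prop :=
  ∀ (OA : Matrix (Fin a) (Fin a) ℂ) (OB : Matrix (Fin b) (Fin b) ℂ),
    projOnto K ∘ₗ Matrix.toEuclideanLin (embA OA) ∘ₗ (LinearMap.id - projOnto K) ∘ₗ
        Matrix.toEuclideanLin (embB OB) ∘ₗ projOnto K = 0 ∧
    projOnto K ∘ₗ Matrix.toEuclideanLin (embB OB) ∘ₗ (LinearMap.id - projOnto K) ∘ₗ
        Matrix.toEuclideanLin (embA OA) ∘ₗ projOnto K = 0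

/-- The subspace `K` *corresponds to a parent commuting Hamiltonian*: there exist
orthogonal projections `Q_{AX}` on `H_A ⊗ H_X` and `Q_{XB}` on `H_X ⊗ H_B` such that
`Q_{AX} ⊗ 1_B` and `1_A ⊗ Q_{XB}` commute and
`K = (ker Q_{AX} ⊗ H_B) ∩ (H_A ⊗ ker Q_{XB})`. -/
def ParentCommutingHamiltonian {a x b : ℕ}
    (K : Submodule ℂ (EuclideanSpace ℂ (Fin a × Fin x × Fin b))) : Prop :=
  ∃ (QAX : Matrix (Fin a × Fin x) (Fin a × Fin x) ℂ)
    (QXB : Matrix (Fin x × Fin b) (Fin x × Fin b) ℂ),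
    QAXᴴ = QAX ∧ QAX * QAX = QAX ∧
    QXBᴴ = QXB ∧ QXB * QXB = QXB ∧
    embAX (b := b) QAX * embXB QXB = embXB QXB * embAX QAX ∧
    K = LinearMap.ker (Matrix.toEuclideanLin (embAX (b := b) QAX)) ⊓
        LinearMap.ker (Matrix.toEuclideanLin (embXB (a := a) QXB))


open scoped InnerProductSpace Kronecker
open Matrix

theorem IsIdempotentElem.mul_mul_one_sub_mul_mul_eq_zero {R : Type*} [Ring R] {p q s t : R}
    (hp : IsIdempotentElem p) (hq : IsIdempotentElem q) (hpq : Commute p q)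
    (hs : Commute s q) (ht : Commute t p) :
    p * q * s * (1 - p * q) * t * (p * q) = 0 := by
  have hp' : (1 - p) * t * (p * q) = 0 := by
    rw [mul_assoc, ← mul_assoc t, ht.eq, ← mul_assoc, ← mul_assoc, hp.one_sub_mul_self,
      zero_mul, zero_mul]
  have hq' : p * q * s * p * (1 - q) = 0 := calc
    _ = p * (q * (s * p)) * (1 - q) := by simp only [mul_assoc]
    _ = p * (s * p) * (q * (1 - q)) := by
      rw [(hs.symm.mul_right hpq.symm).eq]
      simp only [mul_assoc]
    _ = 0 := by rw [hq.mul_one_sub_self, mul_zero]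
  calc p * q * s * (1 - p * q) * t * (p * q)
      = p * q * s * ((1 - p) * t * (p * q)) + p * q * s * p * (1 - q) * t * (p * q) := by
        noncomm_ring
    _ = 0 := by rw [hp', hq']; simp

namespace Submodule

variable {𝕜 E : Type*} [RCLike 𝕜] [NormedAddCommGroup E] [InnerProductSpace 𝕜 E]

theorem starProjection_inf_eq_mul_of_commute {U W : Submodule 𝕜 E}
    [U.HasOrthogonalProjection] [W.HasOrthogonalProjection] [(U ⊓ W).HasOrthogonalProjection]
    (h : Commute U.starProjection W.starProjection) :
    (U ⊓ W).starProjection = U.starProjection * W.starProjection := by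
  ext v
  refine eq_starProjection_of_mem_of_inner_eq_zero
    (mem_inf.2 ⟨U.starProjection_apply_mem _, ?_⟩) (fun z hz => ?_)
  · rw [h.eq]
    exact W.starProjection_apply_mem _
  · rw [inner_sub_left, mul_apply_eq_comp, inner_starProjection_left_eq_right,
      starProjection_eq_self_iff.2 (mem_inf.1 hz).1, inner_starProjection_left_eq_right,
      starProjection_eq_self_iff.2 (mem_inf.1 hz).2, sub_self]

theorem starProjection_inf_mul_one_sub_mul_eq_zero {U W : Submodule 𝕜 E}
    [U.HasOrthogonalProjection] [W.HasOrthogonalProjection] [(U ⊓ W).HasOrthogonalProjection]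
    (hUW : Commute U.starProjection W.starProjection) {s t : E →L[𝕜] E}
    (hs : Commute s W.starProjection) (ht : Commute t U.starProjection) :
    (U ⊓ W).starProjection * s * (1 - (U ⊓ W).starProjection) * t * (U ⊓ W).starProjection
      = 0 := by
  rw [starProjection_inf_eq_mul_of_commute hUW]
  exact U.isIdempotentElem_starProjection.mul_mul_one_sub_mul_mul_eq_zero
    W.isIdempotentElem_starProjection hUW hs ht

theorem sub_starProjection_mem_inf_orthogonal {K U : Submodule 𝕜 E} [K.HasOrthogonalProjection]
    (hKU : K ≤ U) {u : E} (hu : u ∈ U) : u - K.starProjection u ∈ U ⊓ Kᗮ :=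
  ⟨U.sub_mem hu (hKU (K.starProjection_apply_mem u)), sub_starProjection_mem_orthogonal u⟩

theorem IsOrtho.of_inf_orthogonal {K U V : Submodule 𝕜 E} [K.HasOrthogonalProjection]
    (hKU : K ≤ U) (hK : K ⟂ V) (h : (U ⊓ Kᗮ) ⟂ V) : U ⟂ V := by
  intro u hu
  rw [← sub_add_cancel u (K.starProjection u)]
  exact add_mem (h (sub_starProjection_mem_inf_orthogonal hKU hu))
    (hK (K.starProjection_apply_mem u))

theorem starProjection_mul_starProjection_of_isOrtho {K U W : Submodule 𝕜 E}
    [K.HasOrthogonalProjection] [U.HasOrthogonalProjection] [W.HasOrthogonalProjection]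
    (hKU : K ≤ U) (hKW : K ≤ W) (h : (U ⊓ Kᗮ) ⟂ (W ⊓ Kᗮ)) :
    U.starProjection * W.starProjection = K.starProjection := by
  have hW : W ⊓ Kᗮ ≤ Uᗮ :=
    (IsOrtho.of_inf_orthogonal hKU ((isOrtho_orthogonal_right K).mono_right inf_le_right) h).symm
  ext v
  have hKv : K.starProjection (W.starProjection v) = K.starProjection v := by
    rw [← ContinuousLinearMap.comp_apply, starProjection_comp_starProjection_of_le hKW]
  rw [mul_apply_eq_comp, ← sub_add_cancel (W.starProjection v) (K.starProjection v),
    map_add, (starProjection_apply_eq_zero_iff U).2 (hW ?_), zero_add,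
    starProjection_eq_self_iff.2 (hKU (K.starProjection_apply_mem v))]
  rw [← hKv]
  exact sub_starProjection_mem_inf_orthogonal hKW (W.starProjection_apply_mem v)

variable [CompleteSpace E]

theorem _root_.IsStarProjection.one_sub_eq_starProjection_ker {p : E →L[𝕜] E}
    (hp : IsStarProjection p) [p.ker.HasOrthogonalProjection] :
    1 - p = p.ker.starProjection := by
  rw [ContinuousLinearMap.IsStarProjection.ext_iff hp.one_sub isStarProjection_starProjection,
    range_starProjection]
  exact (LinearMap.IsIdempotentElem.ker_eq_range_one_sub
    (ContinuousLinearMap.IsIdempotentElem.toLinearMap hp.isIdempotentElem)).symm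

theorem isOrtho_iSup_map_inf_orthogonal {K : Submodule 𝕜 E} [K.HasOrthogonalProjection]
    {ι κ : Type*} (s : ι → E →L[𝕜] E) (t : κ → E →L[𝕜] E)
    (h : ∀ i j, K.starProjection * star (s i) * (1 - K.starProjection) * t j *
      K.starProjection = 0) :
    ((⨆ i, K.map (s i : E →ₗ[𝕜] E)) ⊓ Kᗮ) ⟂ ((⨆ j, K.map (t j : E →ₗ[𝕜] E)) ⊓ Kᗮ) := by
  set P := K.starProjection
  have hP (X : Submodule 𝕜 E) : X ⊓ Kᗮ ≤ X.map ((1 - P : E →L[𝕜] E) : E →ₗ[𝕜] E) := fun v hv =>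
    ⟨v, (mem_inf.1 hv).1, by simp [P, (starProjection_apply_eq_zero_iff K).2 (mem_inf.1 hv).2]⟩
  refine IsOrtho.mono (hP _) (hP _) ?_
  simp only [Submodule.map_iSup, ← map_comp]
  refine isOrtho_iSup_left.2 fun i => isOrtho_iSup_right.2 fun j => isOrtho_iff_inner_eq.2 ?_
  rintro _ ⟨k, hk, rfl⟩ _ ⟨k', hk', rfl⟩
  have hPsa : IsSelfAdjoint P := isSelfAdjoint_starProjection K
  have hQ : IsStarProjection (1 - P) := isStarProjection_starProjection.one_sub
  have hstar : star ((1 - P) * s i * P) * ((1 - P) * t j * P) =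
      P * star (s i) * (1 - P) * t j * P := calc
    _ = P * star (s i) * ((1 - P) * (1 - P)) * t j * P := by
      simp only [star_mul, hQ.isSelfAdjoint.star_eq, hPsa.star_eq, mul_assoc]
    _ = _ := by rw [hQ.isIdempotentElem.eq]
  rw [← starProjection_eq_self_iff.2 hk, ← starProjection_eq_self_iff.2 hk']
  calc _ = ⟪((1 - P) * s i * P) k, ((1 - P) * t j * P) k'⟫_𝕜 := rfl
    _ = ⟪k, (star ((1 - P) * s i * P) * ((1 - P) * t j * P)) k'⟫_𝕜 := by
      rw [ContinuousLinearMap.star_eq_adjoint, mul_apply_eq_comp (ContinuousLinearMap.adjoint _),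
        ContinuousLinearMap.adjoint_inner_right]
    _ = 0 := by rw [hstar, h, _root_.zero_apply, inner_zero_right]

end Submodule

namespace Matrix

variable {𝕜 n ι κ : Type*} [RCLike 𝕜]

def tensorOne [DecidableEq κ] (e : n ≃ ι × κ) (Q : Matrix ι ι 𝕜) : Matrix n n 𝕜 :=
  (Q ⊗ₖ (1 : Matrix κ κ 𝕜)).submatrix e e

def oneTensor [DecidableEq ι] (e : n ≃ ι × κ) (O : Matrix κ κ 𝕜) : Matrix n n 𝕜 :=
  ((1 : Matrix ι ι 𝕜) ⊗ₖ O).submatrix e e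

theorem tensorOne_mul [Fintype n] [Fintype ι] [Fintype κ] [DecidableEq κ] (e : n ≃ ι × κ)
    (Q Q' : Matrix ι ι 𝕜) : tensorOne e (Q * Q') = tensorOne e Q * tensorOne e Q' := by
  rw [tensorOne, tensorOne, tensorOne, submatrix_mul_equiv, ← mul_kronecker_mul, one_mul]

theorem star_tensorOne [DecidableEq κ] (e : n ≃ ι × κ) (Q : Matrix ι ι 𝕜) :
    star (tensorOne e Q) = tensorOne e (star Q) := by
  simp only [tensorOne, star_eq_conjTranspose, conjTranspose_submatrix, conjTranspose_kronecker,
    conjTranspose_one]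

theorem star_oneTensor [DecidableEq ι] (e : n ≃ ι × κ) (O : Matrix κ κ 𝕜) :
    star (oneTensor e O) = oneTensor e (star O) := by
  simp only [oneTensor, star_eq_conjTranspose, conjTranspose_submatrix, conjTranspose_kronecker,
    conjTranspose_one]

theorem _root_.IsStarProjection.tensorOne [Fintype n] [Fintype ι] [Fintype κ] [DecidableEq κ]
    (e : n ≃ ι × κ) {Q : Matrix ι ι 𝕜} (hQ : IsStarProjection Q) :
    IsStarProjection (tensorOne e Q) where
  isIdempotentElem := by rw [IsIdempotentElem, ← tensorOne_mul, hQ.isIdempotentElem.eq]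
  isSelfAdjoint := by rw [IsSelfAdjoint, star_tensorOne, hQ.isSelfAdjoint.star_eq]

theorem commute_tensorOne_oneTensor [Fintype n] [Fintype ι] [DecidableEq ι] [Fintype κ]
    [DecidableEq κ] (e : n ≃ ι × κ) (Q : Matrix ι ι 𝕜) (O : Matrix κ κ 𝕜) :
    Commute (tensorOne e Q) (oneTensor e O) := by
  rw [Commute, SemiconjBy, tensorOne, oneTensor, submatrix_mul_equiv, submatrix_mul_equiv,
    ← mul_kronecker_mul, ← mul_kronecker_mul, mul_one, one_mul, mul_one, one_mul]

end Matrix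

namespace EuclideanSpace

variable {𝕜 n ι κ : Type*} [RCLike 𝕜] (e : n ≃ ι × κ)

def slice (β : κ) : EuclideanSpace 𝕜 n →ₗ[𝕜] EuclideanSpace 𝕜 ι where
  toFun h := WithLp.toLp 2 fun i => h (e.symm (i, β))
  map_add' _ _ := rfl
  map_smul' _ _ := rfl

def insertSlice [DecidableEq κ] (β : κ) : EuclideanSpace 𝕜 ι →ₗ[𝕜] EuclideanSpace 𝕜 n where
  toFun v := WithLp.toLp 2 fun u => if (e u).2 = β then v (e u).1 else 0
  map_add' v w := by ext u; by_cases hu : (e u).2 = β <;> simp [hu]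
  map_smul' c v := by ext u; by_cases hu : (e u).2 = β <;> simp [hu]

@[simp]
theorem slice_apply (β : κ) (h : EuclideanSpace 𝕜 n) (i : ι) :
    slice e β h i = h (e.symm (i, β)) := rfl

@[simp]
theorem insertSlice_apply [DecidableEq κ] (β : κ) (v : EuclideanSpace 𝕜 ι) (u : n) :
    insertSlice e β v u = if (e u).2 = β then v (e u).1 else 0 := rfl

theorem sum_insertSlice_slice [Fintype κ] [DecidableEq κ] (h : EuclideanSpace 𝕜 n) :
    ∑ β, insertSlice e β (slice e β h) = h := by
  ext u
  simp [WithLp.ofLp_sum]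

variable [Fintype n] [DecidableEq n] [Fintype ι] [DecidableEq ι] [Fintype κ] [DecidableEq κ]

theorem slice_toEuclideanCLM_tensorOne (Q : Matrix ι ι 𝕜) (β : κ) (h : EuclideanSpace 𝕜 n) :
    slice e β (toEuclideanCLM (𝕜 := 𝕜) (tensorOne e Q) h) =
      toEuclideanCLM (𝕜 := 𝕜) Q (slice e β h) := by
  ext i
  simp only [slice_apply, ofLp_toEuclideanCLM, mulVec, dotProduct, tensorOne, submatrix_apply,
    kroneckerMap_apply, one_apply]
  rw [← e.symm.sum_comp, Fintype.sum_prod_type]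
  simp

theorem insertSlice_slice (β β' : κ) (h : EuclideanSpace 𝕜 n) :
    insertSlice e β (slice e β' h) =
      toEuclideanCLM (𝕜 := 𝕜) (oneTensor e (Matrix.single β β' 1)) h := by
  ext u
  simp only [insertSlice_apply, slice_apply, ofLp_toEuclideanCLM, mulVec, dotProduct, oneTensor,
    submatrix_apply, kroneckerMap_apply, one_apply, Matrix.single_apply]
  rw [← e.symm.sum_comp, Fintype.sum_prod_type]
  split_ifs with hu <;> simp [hu, Ne.symm]

end EuclideanSpace

namespace Submodule

open EuclideanSpace

variable {𝕜 n ι κ : Type*} [RCLike 𝕜] (e : n ≃ ι × κ)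

/-- `V ⊗ 𝕜^κ` inside `𝕜^n ≃ 𝕜^ι ⊗ 𝕜^κ`. -/
def ampliate (V : Submodule 𝕜 (EuclideanSpace 𝕜 ι)) : Submodule 𝕜 (EuclideanSpace 𝕜 n) :=
  ⨅ β, V.comap (slice e β)

/-- The smallest `V` with `K ≤ V.ampliate e`. -/
def sliceSupport (K : Submodule 𝕜 (EuclideanSpace 𝕜 n)) : Submodule 𝕜 (EuclideanSpace 𝕜 ι) :=
  ⨆ β, K.map (slice e β)

theorem mem_ampliate {V : Submodule 𝕜 (EuclideanSpace 𝕜 ι)} {h : EuclideanSpace 𝕜 n} :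
    h ∈ V.ampliate e ↔ ∀ β, slice e β h ∈ V := by
  simp [ampliate]

theorem le_ampliate_sliceSupport (K : Submodule 𝕜 (EuclideanSpace 𝕜 n)) :
    K ≤ (K.sliceSupport e).ampliate e := fun _ hk =>
  (mem_ampliate e).2 fun β => mem_iSup_of_mem β (mem_map_of_mem hk)

variable [Fintype n] [DecidableEq n] [Fintype ι] [DecidableEq ι] [Fintype κ] [DecidableEq κ]

theorem ampliate_sliceSupport_le (K : Submodule 𝕜 (EuclideanSpace 𝕜 n)) :
    (K.sliceSupport e).ampliate e ≤
      ⨆ O, K.map (toEuclideanCLM (𝕜 := 𝕜) (oneTensor e O) : _ →ₗ[𝕜] _) := by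
  intro h hh
  rw [← sum_insertSlice_slice e h]
  refine sum_mem fun β _ => ?_
  have hmap : (K.sliceSupport e).map (insertSlice e β) ≤
      ⨆ O, K.map (toEuclideanCLM (𝕜 := 𝕜) (oneTensor e O) : _ →ₗ[𝕜] _) := by
    rw [sliceSupport, map_iSup]
    refine iSup_le fun β' => ?_
    rw [← map_comp]
    refine le_of_eq_of_le ?_ (le_iSup _ (Matrix.single β β' 1))
    congr 1
    exact LinearMap.ext (insertSlice_slice e β β')
  exact hmap (mem_map_of_mem ((mem_ampliate e).1 hh β))

theorem ker_toEuclideanCLM_tensorOne (Q : Matrix ι ι 𝕜) :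
    (toEuclideanCLM (𝕜 := 𝕜) (tensorOne e Q)).ker =
      (toEuclideanCLM (𝕜 := 𝕜) Q).ker.ampliate e := by
  ext h
  simp only [mem_ampliate, LinearMap.mem_ker, ContinuousLinearMap.coe_coe,
    ← slice_toEuclideanCLM_tensorOne]
  refine ⟨fun h0 β => by rw [h0, map_zero], fun h0 => ?_⟩
  rw [← sum_insertSlice_slice e (toEuclideanCLM (𝕜 := 𝕜) (tensorOne e Q) h)]
  simp [h0]

theorem ker_toEuclideanCLM_tensorOne_starProjection_orthogonal
    (V : Submodule 𝕜 (EuclideanSpace 𝕜 ι)) :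
    (toEuclideanCLM (𝕜 := 𝕜) (tensorOne e ((toEuclideanCLM (𝕜 := 𝕜)).symm Vᗮ.starProjection))).ker =
      V.ampliate e := by
  rw [ker_toEuclideanCLM_tensorOne, StarAlgEquiv.apply_symm_apply, ker_starProjection,
    orthogonal_orthogonal]

theorem isStarProjection_toEuclideanCLM_symm_starProjection (V : Submodule 𝕜 (EuclideanSpace 𝕜 ι)) :
    IsStarProjection ((toEuclideanCLM (𝕜 := 𝕜) (n := ι)).symm V.starProjection) :=
  isStarProjection_starProjection.map (toEuclideanCLM (𝕜 := 𝕜) (n := ι)).symm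

theorem toEuclideanCLM_tensorOne_starProjection_orthogonal (V : Submodule 𝕜 (EuclideanSpace 𝕜 ι)) :
    toEuclideanCLM (𝕜 := 𝕜) (tensorOne e ((toEuclideanCLM (𝕜 := 𝕜)).symm Vᗮ.starProjection)) =
      1 - (V.ampliate e).starProjection := by
  have hP := ((isStarProjection_toEuclideanCLM_symm_starProjection Vᗮ).tensorOne e).map
    (toEuclideanCLM (𝕜 := 𝕜))
  rw [← ker_toEuclideanCLM_tensorOne_starProjection_orthogonal, ← hP.one_sub_eq_starProjection_ker,
    sub_sub_cancel]

end Submodule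

section ParentHamiltonian

open Submodule

variable {𝕜 n α α' β β' : Type*} [RCLike 𝕜] [Fintype n] [DecidableEq n]
  [Fintype α] [DecidableEq α] [Fintype α'] [DecidableEq α']
  [Fintype β] [DecidableEq β] [Fintype β'] [DecidableEq β']
  (eA : n ≃ α' × α) (eB : n ≃ β' × β) (K : Submodule 𝕜 (EuclideanSpace 𝕜 n))

theorem decorrelated_of_commute {QAX : Matrix β' β' 𝕜} {QXB : Matrix α' α' 𝕜}
    (hAX : IsStarProjection QAX) (hXB : IsStarProjection QXB)
    (hc : Commute (tensorOne eB QAX) (tensorOne eA QXB))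
    (hK : K = (toEuclideanCLM (𝕜 := 𝕜) (tensorOne eB QAX)).ker ⊓
      (toEuclideanCLM (𝕜 := 𝕜) (tensorOne eA QXB)).ker)
    (OA : Matrix α α 𝕜) (OB : Matrix β β 𝕜) :
    K.starProjection * toEuclideanCLM (𝕜 := 𝕜) (oneTensor eA OA) * (1 - K.starProjection) *
        toEuclideanCLM (𝕜 := 𝕜) (oneTensor eB OB) * K.starProjection = 0 ∧
      K.starProjection * toEuclideanCLM (𝕜 := 𝕜) (oneTensor eB OB) * (1 - K.starProjection) *
        toEuclideanCLM (𝕜 := 𝕜) (oneTensor eA OA) * K.starProjection = 0 := by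
  set EB := toEuclideanCLM (𝕜 := 𝕜) (tensorOne eB QAX)
  set EA := toEuclideanCLM (𝕜 := 𝕜) (tensorOne eA QXB)
  have hPB : EB.ker.starProjection = 1 - EB :=
    ((hAX.tensorOne eB).map toEuclideanCLM).one_sub_eq_starProjection_ker.symm
  have hPA : EA.ker.starProjection = 1 - EA :=
    ((hXB.tensorOne eA).map toEuclideanCLM).one_sub_eq_starProjection_ker.symm
  have commute_one_sub {p q : EuclideanSpace 𝕜 n →L[𝕜] EuclideanSpace 𝕜 n} (h : Commute p q) :
      Commute p (1 - q) :=
    (Commute.one_right p).sub_right h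
  have hBA : Commute EB.ker.starProjection EA.ker.starProjection := by
    rw [hPB, hPA]
    exact (commute_one_sub (commute_one_sub (hc.map toEuclideanCLM)).symm).symm
  have hA : Commute (toEuclideanCLM (𝕜 := 𝕜) (oneTensor eA OA)) EA.ker.starProjection := by
    rw [hPA]
    exact commute_one_sub ((commute_tensorOne_oneTensor eA QXB OA).map toEuclideanCLM).symm
  have hB : Commute (toEuclideanCLM (𝕜 := 𝕜) (oneTensor eB OB)) EB.ker.starProjection := by
    rw [hPB]
    exact commute_one_sub ((commute_tensorOne_oneTensor eB QAX OB).map toEuclideanCLM).symm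
  subst hK
  exact ⟨starProjection_inf_mul_one_sub_mul_eq_zero hBA hA hB,
    inf_comm EB.ker EA.ker ▸ starProjection_inf_mul_one_sub_mul_eq_zero hBA.symm hB hA⟩

theorem exists_commuting_parent_of_decorrelated
    (hD : ∀ (OA : Matrix α α 𝕜) (OB : Matrix β β 𝕜),
      K.starProjection * toEuclideanCLM (𝕜 := 𝕜) (oneTensor eB OB) * (1 - K.starProjection) *
        toEuclideanCLM (𝕜 := 𝕜) (oneTensor eA OA) * K.starProjection = 0) :
    ∃ (QAX : Matrix β' β' 𝕜) (QXB : Matrix α' α' 𝕜),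
      IsStarProjection QAX ∧ IsStarProjection QXB ∧
      Commute (tensorOne eB QAX) (tensorOne eA QXB) ∧
      K = (toEuclideanCLM (𝕜 := 𝕜) (tensorOne eB QAX)).ker ⊓
        (toEuclideanCLM (𝕜 := 𝕜) (tensorOne eA QXB)).ker := by
  set UA := (K.sliceSupport eA).ampliate eA
  set UB := (K.sliceSupport eB).ampliate eB
  have hortho : (UB ⊓ Kᗮ) ⟂ (UA ⊓ Kᗮ) :=
    (isOrtho_iSup_map_inf_orthogonal (fun OB => toEuclideanCLM (𝕜 := 𝕜) (oneTensor eB OB))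
      (fun OA => toEuclideanCLM (𝕜 := 𝕜) (oneTensor eA OA)) fun OB OA => by
        rw [← map_star, star_oneTensor]
        exact hD OA (star OB)).mono
      (inf_le_inf_right _ (ampliate_sliceSupport_le eB K))
      (inf_le_inf_right _ (ampliate_sliceSupport_le eA K))
  have hBA : UB.starProjection * UA.starProjection = K.starProjection :=
    starProjection_mul_starProjection_of_isOrtho
      (le_ampliate_sliceSupport eB K) (le_ampliate_sliceSupport eA K) hortho
  have hAB : UA.starProjection * UB.starProjection = K.starProjection :=
    starProjection_mul_starProjection_of_isOrtho
      (le_ampliate_sliceSupport eA K) (le_ampliate_sliceSupport eB K) hortho.symm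
  have hK : (UB ⊓ UA).starProjection = K.starProjection :=
    (starProjection_inf_eq_mul_of_commute (hBA.trans hAB.symm)).trans hBA
  refine ⟨(toEuclideanCLM (𝕜 := 𝕜) (n := β')).symm (K.sliceSupport eB)ᗮ.starProjection,
    (toEuclideanCLM (𝕜 := 𝕜) (n := α')).symm (K.sliceSupport eA)ᗮ.starProjection,
    isStarProjection_toEuclideanCLM_symm_starProjection _,
    isStarProjection_toEuclideanCLM_symm_starProjection _, ?_, ?_⟩
  · have hc : Commute (1 - UB.starProjection) (1 - UA.starProjection) := by
      simp only [Commute, SemiconjBy, mul_sub, sub_mul, one_mul, mul_one, hBA, hAB]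
      abel
    rw [← toEuclideanCLM_tensorOne_starProjection_orthogonal,
      ← toEuclideanCLM_tensorOne_starProjection_orthogonal] at hc
    simpa using hc.map (toEuclideanCLM (𝕜 := 𝕜) (n := n)).symm
  · rw [ker_toEuclideanCLM_tensorOne_starProjection_orthogonal,
      ker_toEuclideanCLM_tensorOne_starProjection_orthogonal]
    calc K = K.starProjection.range := (range_starProjection K).symm
      _ = UB ⊓ UA := by rw [← hK, range_starProjection]

end ParentHamiltonian

section

variable {a x b : ℕ}

theorem embA_eq_oneTensor (O : Matrix (Fin a) (Fin a) ℂ) :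
    embA (x := x) (b := b) O = oneTensor (Equiv.prodComm _ _) O := by
  ext u v
  simp [embA, oneTensor, one_apply, mul_comm]

theorem embB_eq_oneTensor (O : Matrix (Fin b) (Fin b) ℂ) :
    embB (a := a) (x := x) O = oneTensor (Equiv.prodAssoc _ _ _).symm O := by
  ext u v
  simp [embB, oneTensor, one_apply]

theorem embAX_eq_tensorOne (Q : Matrix (Fin a × Fin x) (Fin a × Fin x) ℂ) :
    embAX (b := b) Q = tensorOne (Equiv.prodAssoc _ _ _).symm Q := by
  ext u v
  simp [embAX, tensorOne, one_apply]

theorem embXB_eq_tensorOne (Q : Matrix (Fin x × Fin b) (Fin x × Fin b) ℂ) :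
    embXB (a := a) Q = tensorOne (Equiv.prodComm _ _) Q := by
  ext u v
  simp [embXB, tensorOne, one_apply, mul_comm]

theorem decorrelated_iff (K : Submodule ℂ (EuclideanSpace ℂ (Fin a × Fin x × Fin b))) :
    Decorrelated K ↔ ∀ OA OB,
      K.starProjection * toEuclideanCLM (𝕜 := ℂ) (oneTensor (Equiv.prodComm _ _) OA) *
          (1 - K.starProjection) *
          toEuclideanCLM (𝕜 := ℂ) (oneTensor (Equiv.prodAssoc _ _ _).symm OB) *
          K.starProjection = 0 ∧
        K.starProjection * toEuclideanCLM (𝕜 := ℂ) (oneTensor (Equiv.prodAssoc _ _ _).symm OB) *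
          (1 - K.starProjection) *
          toEuclideanCLM (𝕜 := ℂ) (oneTensor (Equiv.prodComm _ _) OA) * K.starProjection = 0 := by
  simp only [Decorrelated, embA_eq_oneTensor, embB_eq_oneTensor, ← ContinuousLinearMap.coe_inj]
  rfl

theorem parentCommutingHamiltonian_iff
    (K : Submodule ℂ (EuclideanSpace ℂ (Fin a × Fin x × Fin b))) :
    ParentCommutingHamiltonian K ↔ ∃ QAX QXB, IsStarProjection QAX ∧ IsStarProjection QXB ∧
      Commute (tensorOne (Equiv.prodAssoc (Fin a) (Fin x) (Fin b)).symm QAX)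
        (tensorOne (Equiv.prodComm (Fin a) (Fin x × Fin b)) QXB) ∧
      K = (toEuclideanCLM (𝕜 := ℂ) (tensorOne (Equiv.prodAssoc _ _ _).symm QAX)).ker ⊓
        (toEuclideanCLM (𝕜 := ℂ) (tensorOne (Equiv.prodComm _ _) QXB)).ker := by
  simp only [ParentCommutingHamiltonian, embAX_eq_tensorOne, embXB_eq_tensorOne]
  refine exists₂_congr fun QAX QXB => ?_
  simp only [isStarProjection_iff, IsIdempotentElem, IsSelfAdjoint, star_eq_conjTranspose,
    commute_iff_eq, coe_toEuclideanCLM_eq_toEuclideanLin]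
  tauto

end

/-- A subspace `K ⊆ H_A ⊗ H_X ⊗ H_B` corresponds to a parent commuting Hamiltonian if
and only if the regions `A` and `B` are decorrelated for `K`. -/
theorem parent_commuting_iff_decorrelated {a x b : ℕ}
    (K : Submodule ℂ (EuclideanSpace ℂ (Fin a × Fin x × Fin b))) :
    ParentCommutingHamiltonian K ↔ Decorrelated K := by
  rw [parentCommutingHamiltonian_iff, decorrelated_iff]
  constructor
  · rintro ⟨QAX, QXB, hAX, hXB, hc, hK⟩
    exact decorrelated_of_commute _ _ K hAX hXB hc hK
  · exact fun hD => exists_commuting_parent_of_decorrelated _ _ K fun OA OB => (hD OA OB).2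
end
end

section
/- Let N : {0,1}³ → ℝ be any function such that N_{ijk} = 0 if exactly two of i, j, k are equal to 0, and N_{ijk} > 0 otherwise. For each (i,j,k) ∈ {0,1}³ define the 2×2 matrix A^{ijk} with entries A^{ijk}_{α,β} = δ_{i,α} δ_{k,β} N_{ijk} (α, β ∈ {0,1}), and for N ≥ 1 let ρ^(N) be the diagonal 8^N × 8^N matrix whose diagonal entry indexed by (i_1,j_1,k_1,…,i_N,j_N,k_N) is tr(A^{i_1 j_1 k_1} ··· A^{i_N j_N k_N}). Then rank(ρ^(N)) = τ₊^{2N} + τ₋^{2N}, where τ₊ = (1+√5)/2 and τ₋ = (1−√5)/2. -/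
noncomputable section

/-- Exactly two of the three indices are `0`. -/
def twoZeros (v : Fin 2 × Fin 2 × Fin 2) : Prop :=
  (v.1 = 0 ∧ v.2.1 = 0 ∧ v.2.2 ≠ 0) ∨
  (v.1 = 0 ∧ v.2.1 ≠ 0 ∧ v.2.2 = 0) ∨
  (v.1 ≠ 0 ∧ v.2.1 = 0 ∧ v.2.2 = 0)

/-- The Fibonacci boundary tensor: `A^{ijk}_{α,β} = δ_{i,α} δ_{k,β} N_{ijk}`. -/
def fibA (Nf : Fin 2 × Fin 2 × Fin 2 → ℝ) (v : Fin 2 × Fin 2 × Fin 2) :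
    Matrix (Fin 2) (Fin 2) ℂ :=
  fun α β => if v.1 = α ∧ v.2.2 = β then (Nf v : ℂ) else 0

/-- The diagonal MPDO of length `N` generated by the Fibonacci boundary tensor with
periodic boundary conditions. -/
def fibRho (Nf : Fin 2 × Fin 2 × Fin 2 → ℝ) (N : ℕ) :
    Matrix (Fin N → Fin 2 × Fin 2 × Fin 2) (Fin N → Fin 2 × Fin 2 × Fin 2) ℂ :=
  Matrix.diagonal fun is => Matrix.trace (List.ofFn fun n => fibA Nf (is n)).prod

/-!
Each `A^{ijk}` is the rank-one matrix `N_{ijk} e_i e_kᵀ`, so the trace of a product of them is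
`∏ₙ N_{iₙjₙkₙ}` when `kₙ = iₙ₊₁` cyclically and `0` otherwise. Hence the rank of `ρ^(N)` only
depends on the support of `N`; taking for `N` the indicator of that support makes `ρ^(N)` a
diagonal `0/1` matrix, whose rank is its trace. Expanding the trace over all index tuples gives
`tr (T^N)` for the transfer matrix `T = ∑ A^{ijk} = [[1, 1], [1, 2]]`, the square of the Fibonacci
matrix `[[0, 1], [1, 1]]`, whose eigenvalues are `τ₊` and `τ₋`.
-/

open Matrix
open scoped goldenRatio

namespace Matrix

variable {ι R : Type*} [Fintype ι] [CommSemiring R]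

theorem list_ofFn_vecMulVec_prod [DecidableEq ι] {m : ℕ} (u w : Fin (m + 1) → ι → R) :
    (List.ofFn fun k => vecMulVec (u k) (w k)).prod =
      (∏ k : Fin m, w k.castSucc ⬝ᵥ u k.succ) • vecMulVec (u 0) (w (Fin.last m)) := by
  induction m with
  | zero => simp
  | succ m ih =>
    rw [List.ofFn_succ, List.prod_cons, ih (fun k => u k.succ) (fun k => w k.succ),
      mul_smul_comm, vecMulVec_mul_vecMulVec, vecMulVec_smul, smul_smul, Fin.prod_univ_succ]
    simp [mul_comm]

theorem trace_list_ofFn_vecMulVec_prod [DecidableEq ι] {m : ℕ} (u w : Fin (m + 1) → ι → R) :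
    trace (List.ofFn fun k => vecMulVec (u k) (w k)).prod = ∏ k, w k ⬝ᵥ u (k + 1) := by
  rw [list_ofFn_vecMulVec_prod, trace_smul, trace_vecMulVec, Fin.prod_univ_castSucc,
    Fin.last_add_one, dotProduct_comm]
  simp [Fin.coeSucc_eq_succ]

theorem sum_list_ofFn_prod {S V : Type*} [Semiring S] [Fintype V] (B : V → S) (n : ℕ) :
    ∑ f : Fin n → V, (List.ofFn fun k => B (f k)).prod = (∑ v, B v) ^ n := by
  induction n with
  | zero => simp
  | succ n ih =>
    rw [← (Fin.consEquiv fun _ => V).sum_comp, Fintype.sum_prod_type, pow_succ', ← ih,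
      Finset.sum_mul_sum]
    simp [List.ofFn_succ]

theorem trace_pow_fin_two {K : Type*} [CommRing K] (M : Matrix (Fin 2) (Fin 2) K) {x y : K}
    (hsum : M.trace = x + y) (hprod : M.det = x * y) (n : ℕ) :
    (M ^ n).trace = x ^ n + y ^ n := by
  have cayley_hamilton : M ^ 2 = M.trace • M - M.det • 1 := by
    ext i j
    fin_cases i <;> fin_cases j <;>
      simp [sq, mul_apply, trace_fin_two, det_fin_two] <;> ring
  induction n using Nat.twoStepInduction with
  | zero => norm_num [trace_one]
  | one => simpa using hsum
  | more n ih₀ ih₁ =>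
    rw [pow_add, cayley_hamilton, mul_sub, mul_smul_comm, mul_smul_comm, ← pow_succ, mul_one,
      trace_sub, trace_smul, trace_smul, ih₀, ih₁, hsum, hprod, smul_eq_mul, smul_eq_mul]
    ring

theorem rank_diagonal_eq_trace {m K : Type*} [Fintype m] [DecidableEq m] [Field K]
    (d : m → K) (hd : ∀ i, d i = 0 ∨ d i = 1) :
    ((diagonal d).rank : K) = trace (diagonal d) := by
  classical
  rw [rank_diagonal, trace_diagonal, Fintype.card_subtype, Finset.card_filter, Nat.cast_sum]
  refine Finset.sum_congr rfl fun i _ => ?_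
  rcases hd i with h | h <;> simp [h]

end Matrix

theorem fibA_eq_vecMulVec (Nf : Fin 2 × Fin 2 × Fin 2 → ℝ) (v : Fin 2 × Fin 2 × Fin 2) :
    fibA Nf v = vecMulVec (Pi.single v.1 1) (Pi.single v.2.2 (Nf v : ℂ)) := by
  ext α β
  simp only [fibA, vecMulVec_apply, Pi.single_apply]
  split_ifs <;> simp_all [eq_comm]

theorem trace_list_ofFn_fibA_prod (Nf : Fin 2 × Fin 2 × Fin 2 → ℝ) {m : ℕ}
    (is : Fin (m + 1) → Fin 2 × Fin 2 × Fin 2) :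
    trace (List.ofFn fun n => fibA Nf (is n)).prod =
      ∏ n, if (is n).2.2 = (is (n + 1)).1 then (Nf (is n) : ℂ) else 0 := by
  simp_rw [fibA_eq_vecMulVec, trace_list_ofFn_vecMulVec_prod, single_dotProduct,
    Pi.single_apply, mul_ite, mul_one, mul_zero]

theorem trace_fibRho (Nf : Fin 2 × Fin 2 × Fin 2 → ℝ) (N : ℕ) :
    trace (fibRho Nf N) = trace ((∑ v, fibA Nf v) ^ N) := by
  rw [fibRho, trace_diagonal, ← sum_list_ofFn_prod, trace_sum]

theorem rank_fibRho_congr {Nf Nf' : Fin 2 × Fin 2 × Fin 2 → ℝ}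
    (h : ∀ v, Nf v ≠ 0 ↔ Nf' v ≠ 0) (m : ℕ) :
    (fibRho Nf (m + 1)).rank = (fibRho Nf' (m + 1)).rank := by
  simp_rw [fibRho, rank_diagonal, trace_list_ofFn_fibA_prod, Finset.prod_ne_zero_iff,
    Finset.mem_univ, true_implies, ne_eq, ite_eq_right_iff, Classical.not_imp,
    Complex.ofReal_eq_zero, ← ne_eq, h]

instance : DecidablePred twoZeros := fun v => by unfold twoZeros; infer_instance

def fibIndicator (v : Fin 2 × Fin 2 × Fin 2) : ℝ := if twoZeros v then 0 else 1

theorem trace_list_ofFn_fibA_fibIndicator_prod_eq_zero_or_one {m : ℕ}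
    (is : Fin (m + 1) → Fin 2 × Fin 2 × Fin 2) :
    trace (List.ofFn fun n => fibA fibIndicator (is n)).prod = 0 ∨
      trace (List.ofFn fun n => fibA fibIndicator (is n)).prod = 1 := by
  rw [trace_list_ofFn_fibA_prod]
  refine Finset.prod_induction _ (fun x => x = 0 ∨ x = 1) ?_ (Or.inr rfl) fun n _ => ?_
  · rintro x y (rfl | rfl) (rfl | rfl) <;> simp
  · unfold fibIndicator
    split_ifs <;> simp

theorem sum_fibA_fibIndicator :
    ∑ v, fibA fibIndicator v = !![0, 1; 1, 1] ^ 2 := by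
  ext α β
  fin_cases α <;> fin_cases β <;>
    simp [fibA, fibIndicator, twoZeros, Fintype.sum_prod_type, sq, mul_apply]

/-- **Rank of the boundary MPDO of the Fibonacci string-net model:**
`rank ρ^(N) = τ₊^{2N} + τ₋^{2N}`, where `τ± = (1 ± √5)/2`. -/
theorem fibonacci_boundary_rank
    (Nf : Fin 2 × Fin 2 × Fin 2 → ℝ)
    (h0 : ∀ v, twoZeros v → Nf v = 0)
    (hpos : ∀ v, ¬ twoZeros v → 0 < Nf v)
    (N : ℕ) (hN : 1 ≤ N) :
    ((fibRho Nf N).rank : ℝ) =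
      ((1 + Real.sqrt 5) / 2) ^ (2 * N) + ((1 - Real.sqrt 5) / 2) ^ (2 * N) := by
  obtain ⟨m, rfl⟩ := Nat.exists_eq_add_of_le' hN
  have hsupport : ∀ v, Nf v ≠ 0 ↔ fibIndicator v ≠ 0 := fun v => by
    by_cases hv : twoZeros v
    · simp [fibIndicator, hv, h0 v hv]
    · simp [fibIndicator, hv, (hpos v hv).ne']
  have htrace : trace (!![0, 1; 1, 1] : Matrix (Fin 2) (Fin 2) ℂ) = φ + ψ := by
    rw [trace_fin_two_of, ← Complex.ofReal_add, Real.goldenRatio_add_goldenConj]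
    norm_num
  have hdet : det (!![0, 1; 1, 1] : Matrix (Fin 2) (Fin 2) ℂ) = φ * ψ := by
    rw [det_fin_two_of, ← Complex.ofReal_mul, Real.goldenRatio_mul_goldenConj]
    norm_num
  have hrank : ((fibRho Nf (m + 1)).rank : ℂ) = φ ^ (2 * (m + 1)) + ψ ^ (2 * (m + 1)) := by
    rw [rank_fibRho_congr hsupport, fibRho,
      rank_diagonal_eq_trace _ trace_list_ofFn_fibA_fibIndicator_prod_eq_zero_or_one, ← fibRho,
      trace_fibRho, sum_fibA_fibIndicator, ← pow_mul, trace_pow_fin_two _ htrace hdet]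
  exact_mod_cast hrank
end
end

section
/- Let E be an n×n complex matrix such that sup_{m ≥ 1} ‖E^m‖ < ∞ (E is power bounded) and such that for every integer k ≥ 1 the matrix E^k is similar to E, i.e., there exists an invertible matrix S_k with E^k = S_k E S_k^{-1}. Then E² = E. -/
/-!
Similarity to its powers makes the finite spectrum of `E` invariant under every power map, so each
eigenvalue is `0` or a root of unity; raising to a common multiple of the orders shows that it is
`0` or `1`. Hence `E (E - 1)` is nilpotent: `E ^ (a + 1) (E - 1) ^ (a + 1) = 0`. Similarity of
`E` and `E ^ 2` gives `ker E = ker (E ^ 2)`, which reduces `E ^ (a + 1)` to `E`. Power-boundedness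
reduces `(E - 1) ^ (a + 1)` to `E - 1`: if `(E - 1) ^ 2 Y = 0` then `E ^ m Y = Y + m (E - 1) Y`,
which stays bounded only if `(E - 1) Y = 0`.
-/

open Polynomial

section PowerMaps

variable {M : Type*} [MonoidWithZero M] [IsLeftCancelMulZero M] {S : Set M}

theorem Set.Finite.isOfFinOrder_of_forall_pow_succ_mem (hS : S.Finite) {μ : M} (hμ : μ ≠ 0)
    (h : ∀ k, μ ^ (k + 1) ∈ S) : IsOfFinOrder μ := by
  obtain ⟨i, j, hij, heq⟩ := hS.exists_lt_map_eq_of_forall_mem h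
  refine isOfFinOrder_iff_pow_eq_one.2 ⟨j - i, Nat.sub_pos_of_lt hij, ?_⟩
  refine mul_left_cancel₀ (pow_ne_zero (i + 1) hμ) ?_
  rw [← pow_add, mul_one, show i + 1 + (j - i) = j + 1 by omega, heq]

theorem Set.Finite.subset_zero_one_of_forall_image_pow_eq (hS : S.Finite)
    (h : ∀ k, 0 < k → (· ^ k) '' S = S) : S ⊆ {0, 1} := by
  classical
  have hfin : ∀ μ ∈ S, μ ≠ 0 → IsOfFinOrder μ := fun μ hμ hμ0 ↦
    hS.isOfFinOrder_of_forall_pow_succ_mem hμ0 fun k ↦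
      h (k + 1) k.succ_pos ▸ ⟨μ, hμ, rfl⟩
  -- `K` is a common multiple of the orders of the nonzero points of `S`
  set K := ∏ μ ∈ hS.toFinset with μ ≠ 0, orderOf μ
  have hK : 0 < K := Finset.prod_pos fun μ hμ ↦ by
    simp only [Finset.mem_filter, Set.Finite.mem_toFinset] at hμ
    exact (hfin μ hμ.1 hμ.2).orderOf_pos
  intro μ hμ
  obtain ⟨ν, hν, rfl⟩ := (h K hK).symm ▸ hμ
  by_cases hν0 : ν = 0
  · exact .inl (by simp [hν0, hK.ne'])
  · refine .inr (orderOf_dvd_iff_pow_eq_one.1 (Finset.dvd_prod_of_mem _ ?_))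
    simpa using ⟨hν, hν0⟩

end PowerMaps

theorem pow_mul_eq_add_nsmul_of_sub_one_sq_mul_eq_zero {R : Type*} [Ring R] {a y : R}
    (h : (a - 1) ^ 2 * y = 0) (m : ℕ) : a ^ m * y = y + m • ((a - 1) * y) := by
  have hfix : a * ((a - 1) * y) = (a - 1) * y := by
    calc a * ((a - 1) * y) = (a - 1) ^ 2 * y + (a - 1) * y := by noncomm_ring
      _ = (a - 1) * y := by rw [h, zero_add]
  induction m with
  | zero => simp
  | succ m ih =>
    rw [pow_succ', mul_assoc, ih, mul_add, mul_smul_comm, hfix, succ_nsmul]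
    noncomm_ring

theorem eq_zero_of_forall_norm_add_nsmul_le {E : Type*} [NormedAddCommGroup E] [NormedSpace ℝ E]
    {y z : E} {C : ℝ} (h : ∀ m : ℕ, 1 ≤ m → ‖y + m • z‖ ≤ C) : z = 0 := by
  by_contra hz
  have hz' : 0 < ‖z‖ := norm_pos_iff.2 hz
  obtain ⟨m, hm⟩ := exists_nat_gt ((C + ‖y‖) / ‖z‖)
  have hle : ((m + 1 : ℕ) : ℝ) * ‖z‖ ≤ C + ‖y‖ := by
    calc ((m + 1 : ℕ) : ℝ) * ‖z‖ = ‖(y + (m + 1) • z) - y‖ := by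
          rw [add_sub_cancel_left, RCLike.norm_nsmul ℝ, nsmul_eq_mul]
      _ ≤ ‖y + (m + 1) • z‖ + ‖y‖ := norm_sub_le _ _
      _ ≤ C + ‖y‖ := by gcongr; exact h _ le_add_self
  rw [div_lt_iff₀ hz'] at hm
  push_cast at hle
  nlinarith

namespace Matrix

variable {n : Type*} [Fintype n] [DecidableEq n]

section Spectrum

variable {K : Type*} [Field K] [IsAlgClosed K]

theorem spectrum_subset_zero_one_of_forall_spectrum_pow_eq {A : Matrix n n K}
    (h : ∀ k, 0 < k → spectrum K (A ^ k) = spectrum K A) : spectrum K A ⊆ {0, 1} :=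
  A.finite_spectrum.subset_zero_one_of_forall_image_pow_eq fun k hk ↦
    (spectrum.map_pow_of_pos A hk).symm.trans (h k hk)

theorem isNilpotent_aeval_of_forall_mem_spectrum_isRoot (A : Matrix n n K) {p : K[X]}
    (h : ∀ μ ∈ spectrum K A, p.IsRoot μ) : IsNilpotent (aeval A p) := by
  have hsplit := (IsAlgClosed.splits A.charpoly).eq_prod_roots_of_monic A.charpoly_monic
  have hdvd : A.charpoly ∣ p ^ Multiset.card A.charpoly.roots := by
    have := Multiset.prod_dvd_prod_of_dvd (S := A.charpoly.roots) (X - C ·) (fun _ ↦ p)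
      fun μ hμ ↦ dvd_iff_isRoot.2 <|
        h μ (mem_spectrum_iff_isRoot_charpoly.2 (mem_roots'.1 hμ).2)
    rwa [Multiset.map_const', Multiset.prod_replicate, ← hsplit] at this
  obtain ⟨q, hq⟩ := hdvd
  refine ⟨Multiset.card A.charpoly.roots, ?_⟩
  rw [← map_pow, hq, map_mul, aeval_self_charpoly, zero_mul]

end Spectrum

theorem rank_units_conj {R : Type*} [CommRing R] (u : (Matrix n n R)ˣ) (A : Matrix n n R) :
    ((u : Matrix n n R) * A * (↑u⁻¹ : Matrix n n R)).rank = A.rank := by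
  rw [rank_mul_eq_left_of_isUnit_det _ _ (isUnit_det_of_invertible _),
    rank_mul_eq_right_of_isUnit_det _ _ (isUnit_det_of_invertible _)]

section Kernel

variable {K : Type*} [Field K]

theorem ker_toLin'_sq_eq_of_rank_sq_eq {A : Matrix n n K} (h : (A ^ 2).rank = A.rank) :
    LinearMap.ker (toLin' A ^ 2) = LinearMap.ker (toLin' A) := by
  refine (Submodule.eq_of_le_of_finrank_eq ?_ ?_).symm
  · rw [sq]; exact LinearMap.ker_le_ker_comp _ _
  · have hA := LinearMap.finrank_range_add_finrank_ker (toLin' A)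
    have hA2 := LinearMap.finrank_range_add_finrank_ker (toLin' A ^ 2)
    have hrange : Module.finrank K (LinearMap.range (toLin' A ^ 2)) =
        Module.finrank K (LinearMap.range (toLin' A)) := by
      rw [← toLin'_pow]; exact h
    omega

theorem mul_eq_zero_of_pow_succ_mul_eq_zero {A B : Matrix n n K} (h : (A ^ 2).rank = A.rank)
    {k : ℕ} (hB : A ^ (k + 1) * B = 0) : A * B = 0 := by
  have hker : LinearMap.ker (toLin' A ^ (k + 1)) = LinearMap.ker (toLin' A) := by
    have hstable : LinearMap.ker (toLin' A ^ 1) = LinearMap.ker (toLin' A ^ 2) := by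
      rw [pow_one, ker_toLin'_sq_eq_of_rank_sq_eq h]
    rw [add_comm, ← Module.End.ker_pow_constant hstable k, pow_one]
  apply toLin'.injective
  rw [toLin'_mul, map_zero, ← LinearMap.range_le_ker_iff, ← hker, LinearMap.range_le_ker_iff,
    ← toLin'_pow, ← toLin'_mul, hB, map_zero]

end Kernel

section PowerBounded

variable {𝕜 : Type*} [RCLike 𝕜]

def IsPowerBounded (A : Matrix n n 𝕜) : Prop :=
  ∃ C : ℝ, ∀ m : ℕ, 1 ≤ m → ∀ i j, ‖(A ^ m) i j‖ ≤ C

theorem IsPowerBounded.exists_norm_pow_mul_apply_le {A : Matrix n n 𝕜} (hA : A.IsPowerBounded)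
    (B : Matrix n n 𝕜) (i j : n) :
    ∃ C : ℝ, ∀ m : ℕ, 1 ≤ m → ‖(A ^ m * B) i j‖ ≤ C := by
  obtain ⟨C, hC⟩ := hA
  refine ⟨C * ∑ l, ‖B l j‖, fun m hm ↦ ?_⟩
  calc ‖(A ^ m * B) i j‖ ≤ ∑ l, ‖(A ^ m) i l‖ * ‖B l j‖ := by
        rw [mul_apply]
        exact (norm_sum_le _ _).trans_eq (Finset.sum_congr rfl fun l _ ↦ norm_mul _ _)
    _ ≤ ∑ l, C * ‖B l j‖ := by gcongr with l; exact hC m hm i l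
    _ = C * ∑ l, ‖B l j‖ := by rw [Finset.mul_sum]

theorem IsPowerBounded.sub_one_mul_eq_zero_of_sub_one_sq_mul_eq_zero {A B : Matrix n n 𝕜}
    (hA : A.IsPowerBounded) (hB : (A - 1) ^ 2 * B = 0) : (A - 1) * B = 0 := by
  ext i j
  obtain ⟨C, hC⟩ := hA.exists_norm_pow_mul_apply_le B i j
  refine eq_zero_of_forall_norm_add_nsmul_le (y := B i j) (C := C) fun m hm ↦ ?_
  have hm := hC m hm
  rwa [pow_mul_eq_add_nsmul_of_sub_one_sq_mul_eq_zero hB, add_apply, smul_apply] at hm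

theorem IsPowerBounded.sub_one_mul_eq_zero_of_sub_one_pow_succ_mul_eq_zero {A B : Matrix n n 𝕜}
    (hA : A.IsPowerBounded) {k : ℕ} (hB : (A - 1) ^ (k + 1) * B = 0) : (A - 1) * B = 0 := by
  induction k generalizing B with
  | zero => simpa using hB
  | succ k ih =>
    apply ih
    rw [pow_succ', mul_assoc]
    apply hA.sub_one_mul_eq_zero_of_sub_one_sq_mul_eq_zero
    rwa [← mul_assoc, ← pow_add, add_comm]

end PowerBounded

end Matrix

/-- A power-bounded complex matrix which is similar to each of its powers is
idempotent: `E² = E`. -/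
theorem power_bounded_selfsimilar_implies_idempotent
    {n : ℕ} (E : Matrix (Fin n) (Fin n) ℂ)
    (hbound : ∃ C : ℝ, ∀ m : ℕ, 1 ≤ m → ∀ i j, ‖(E ^ m) i j‖ ≤ C)
    (hsim : ∀ k : ℕ, 1 ≤ k → ∃ S S' : Matrix (Fin n) (Fin n) ℂ,
      S * S' = 1 ∧ S' * S = 1 ∧ E ^ k = S * E * S') :
    E * E = E := by
  have hconj (k : ℕ) (hk : 0 < k) :
      ∃ u : (Matrix (Fin n) (Fin n) ℂ)ˣ,
        E ^ k = u * E * (↑u⁻¹ : Matrix (Fin n) (Fin n) ℂ) := by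
    obtain ⟨S, S', hSS', hS'S, hEk⟩ := hsim k hk
    exact ⟨⟨S, S', hSS', hS'S⟩, hEk⟩
  have hspec : spectrum ℂ E ⊆ {0, 1} := by
    refine Matrix.spectrum_subset_zero_one_of_forall_spectrum_pow_eq fun k hk ↦ ?_
    obtain ⟨u, hu⟩ := hconj k hk
    rw [hu, spectrum.units_conjugate]
  have hrank : (E ^ 2).rank = E.rank := by
    obtain ⟨u, hu⟩ := hconj 2 two_pos
    rw [hu, Matrix.rank_units_conj]
  have hcomm : Commute E (E - 1) := (Commute.refl E).sub_right (Commute.one_right E)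
  obtain ⟨a, ha⟩ : IsNilpotent (E * (E - 1)) := by
    have hp : aeval E (X * (X - 1) : ℂ[X]) = E * (E - 1) := by simp
    exact hp ▸ E.isNilpotent_aeval_of_forall_mem_spectrum_isRoot
      fun μ hμ ↦ by rcases hspec hμ with rfl | rfl <;> simp
  have hker : E * (E - 1) ^ (a + 1) = 0 :=
    Matrix.mul_eq_zero_of_pow_succ_mul_eq_zero hrank
      (by rw [← hcomm.mul_pow, pow_succ, ha, zero_mul])
  have hfix : (E - 1) * E = 0 :=
    Matrix.IsPowerBounded.sub_one_mul_eq_zero_of_sub_one_pow_succ_mul_eq_zero hbound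
      ((hcomm.pow_right (a + 1)).eq.symm.trans hker)
  rwa [sub_one_mul, sub_eq_zero] at hfix
end
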